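/- arXiv:2605.12323 — 2 statements merged into one kernel-verified Lean document; each statement's English description precedes it below -/
import Mathlib

section
/- Let H be a nontrivial ordered abelian group and let χ : ℚ → H be an injective group homomorphism from the additive group of rationals into H. Then either χ or −χ is strictly order preserving (where ℚ carries its usual order). -/
namespace AddMonoidHom

variable {H : Type*} [AddCommGroup H] [LinearOrder H] [IsOrderedAddMonoid H]

theorem rat_map_pos_of_map_one_pos (χ : ℚ →+ H) (h1 : 0 < χ 1) {q : ℚ} (hq : 0 < q) :
    0 < χ q := by
  have hclear : q.den • χ q = q.num • χ 1 := by
    rw [← map_nsmul, ← map_zsmul, nsmul_eq_mul, zsmul_one, q.den_mul_eq_num]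
  have hnum : 0 < q.num • χ 1 := zsmul_pos h1 (Rat.num_pos.mpr hq)
  rwa [← hclear, nsmul_pos_iff q.den_ne_zero] at hnum

theorem rat_strictMono_of_map_one_pos (χ : ℚ →+ H) (h1 : 0 < χ 1) : StrictMono χ :=
  (strictMono_iff_map_pos χ).2 fun _ => χ.rat_map_pos_of_map_one_pos h1

end AddMonoidHom

theorem stmt4_general {H : Type*} [AddCommGroup H] [LinearOrder H] [IsOrderedAddMonoid H]
    (χ : ℚ →+ H) (hχ : Function.Injective χ) :
    StrictMono χ ∨ StrictMono (fun q : ℚ => - χ q) := by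
  have h1 : χ 1 ≠ 0 := by simpa using hχ.ne (one_ne_zero' ℚ)
  rcases h1.lt_or_gt with hneg | hpos
  · exact .inr <| (-χ).rat_strictMono_of_map_one_pos (neg_pos.2 hneg)
  · exact .inl <| χ.rat_strictMono_of_map_one_pos hpos

/-- If `χ : ℚ → H` is an injective group homomorphism into a nontrivial
ordered abelian group, then either `χ` or `-χ` is strictly order preserving. -/
theorem stmt4 {H : Type*} [AddCommGroup H] [LinearOrder H] [IsOrderedAddMonoid H] [Nontrivial H]
    (χ : ℚ →+ H) (hχ : Function.Injective χ) :
    StrictMono χ ∨ StrictMono (fun q : ℚ => - χ q) :=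
  stmt4_general χ hχ
end

section
/- Let (J, +, C) be a cyclically ordered abelian group, define a ≺ b iff (a = 0 and b ≠ 0) or C(0, a, b), and define on ℤ × J the operation (m,a) ⊕ (m*,a*) = (m + m*, a + a*) if a = 0 or a* = 0 or C(0, a, a + a*), and (m + m* + 1, a + a*) otherwise. Then (ℤ × J, ⊕) is an abelian group with identity (0,0). -/
section AuxCyc

variable {J : Type*} [AddCommGroup J] {C : J → J → J → Prop}

/-- Bundle of the cyclic-order axioms. -/
structure AuxHyp {J : Type*} [AddCommGroup J] (C : J → J → J → Prop) : Prop where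
  dist : ∀ a b c : J, C a b c → a ≠ b ∧ b ≠ c ∧ a ≠ c
  trans : ∀ a b c d : J, C a b c → C a c d → C a b d
  total : ∀ a b c : J, a ≠ b → b ≠ c → a ≠ c → C a b c ∨ C c b a
  cyc : ∀ a b c : J, C a b c → C b c a
  transl : ∀ a b c d : J, C a b c → C (a + d) (b + d) (c + d)

/-- The "no wrap" predicate. -/
abbrev auxP (C : J → J → J → Prop) (x y : J) : Prop := x = 0 ∨ y = 0 ∨ C 0 x (x + y)

lemma aux_eq_of {x y w : J} (hw : w = 0) (h : x - y = w) : x = y :=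
  sub_eq_zero.mp (h.trans hw)

lemma aux_shift (H : AuxHyp C) {x y z x' y' z' : J} (d : J) (h : C x y z)
    (hx : x' = x + d) (hy : y' = y + d) (hz : z' = z + d) : C x' y' z' := by
  subst hx hy hz; exact H.transl x y z d h

lemma aux_asym (H : AuxHyp C) {x y z : J} (h : C x y z) : ¬ C x z y :=
  fun h' => (H.dist x y y (H.trans x y z y h h')).2.1 rfl

lemma aux_tot (H : AuxHyp C) {x y : J} (hx : x ≠ 0) (hy : y ≠ 0) (hxy : x ≠ y)
    (h : ¬ C 0 x y) : C 0 y x := by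
  rcases H.total 0 x y (Ne.symm hx) hxy (Ne.symm hy) with h' | h'
  · exact absurd h' h
  · exact H.cyc _ _ _ (H.cyc _ _ _ h')

/-- Negation reverses the cyclic order at 0. -/
lemma aux_neg (H : AuxHyp C) {x y : J} (h : C 0 x y) : C 0 (-y) (-x) := by
  obtain ⟨h1, h2, h3⟩ := H.dist _ _ _ h
  by_contra hc
  have h0 : C 0 (-x) (-y) :=
    aux_tot H (neg_ne_zero.mpr (Ne.symm h3)) (neg_ne_zero.mpr (Ne.symm h1))
      (fun hE => h2 (neg_injective hE).symm) hc
  have s1a : C x 0 (x - y) := aux_shift H x h0 (by abel) (by abel) (by abel)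
  have s1 : C 0 (x - y) x := H.cyc _ _ _ s1a
  have s2a : C y (y - x) 0 := aux_shift H y h0 (by abel) (by abel) (by abel)
  have s2 : C 0 y (y - x) := H.cyc _ _ _ (H.cyc _ _ _ s2a)
  have s3a : C (-x) 0 (y - x) := aux_shift H (-x) h (by abel) (by abel) (by abel)
  have s3 : C 0 (y - x) (-x) := H.cyc _ _ _ s3a
  have s4 : C 0 y (-x) := H.trans _ _ _ _ s2 s3
  have s5 : C 0 x (-x) := H.trans _ _ _ _ h s4
  have s6 : C 0 x (-y) := H.trans _ _ _ _ s5 h0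
  have s7 : C 0 (x - y) (-y) := H.trans _ _ _ _ s1 s6
  have s8a : C y x 0 := aux_shift H y s7 (by abel) (by abel) (by abel)
  have s8 : C 0 y x := H.cyc _ _ _ (H.cyc _ _ _ s8a)
  exact aux_asym H h s8

/-- Symmetry of the no-wrap condition. -/
lemma aux_symW (H : AuxHyp C) {a b : J} (ha : a ≠ 0) (hb : b ≠ 0) (hs : a + b ≠ 0)
    (h : C 0 a (a + b)) : C 0 b (a + b) := by
  by_contra hc
  have h2 : C 0 (a + b) b :=
    aux_tot H hb hs (fun hE => ha (add_eq_right.mp hE.symm)) hc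
  have h3 : C 0 a b := H.trans _ _ _ _ h h2
  have h4a : C (-a) 0 b := aux_shift H (-a) h (by abel) (by abel) (by abel)
  have h4 : C 0 b (-a) := H.cyc _ _ _ h4a
  have h5a : C (-b) a 0 := aux_shift H (-b) h2 (by abel) (by abel) (by abel)
  have h5 : C 0 (-b) a := H.cyc _ _ _ (H.cyc _ _ _ h5a)
  have h6 : C 0 (-b) b := H.trans _ _ _ _ h5 h3
  have h7 : C 0 (-b) (-a) := H.trans _ _ _ _ h6 h4
  have h8a : C (-(a + b)) (-b) 0 := aux_shift H (-(a + b)) h (by abel) (by abel) (by abel)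
  have h8 : C 0 (-(a + b)) (-b) := H.cyc _ _ _ (H.cyc _ _ _ h8a)
  have h9a : C (-(a + b)) 0 (-a) := aux_shift H (-(a + b)) h2 (by abel) (by abel) (by abel)
  have h9 : C 0 (-a) (-(a + b)) := H.cyc _ _ _ h9a
  have h10 : C 0 (-a) (-b) := H.trans _ _ _ _ h9 h8
  exact aux_asym H h10 h7

lemma aux_unP (H : AuxHyp C) {x y : J} (h : ¬ auxP C x y) :
    x ≠ 0 ∧ y ≠ 0 ∧ (x + y = 0 ∨ C 0 (x + y) x) := by
  have hx : x ≠ 0 := fun h0 => h (Or.inl h0)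
  have hy : y ≠ 0 := fun h0 => h (Or.inr (Or.inl h0))
  refine ⟨hx, hy, ?_⟩
  by_cases hs : x + y = 0
  · exact Or.inl hs
  · exact Or.inr (aux_tot H hx hs (fun hE => hy (add_eq_left.mp hE.symm))
      (fun hC => h (Or.inr (Or.inr hC))))

lemma aux_mkNP (H : AuxHyp C) {x y : J} (hx : x ≠ 0) (hy : y ≠ 0)
    (h : x + y = 0 ∨ C 0 (x + y) x) : ¬ auxP C x y := by
  rintro (h0 | h0 | h0)
  · exact hx h0
  · exact hy h0
  · rcases h with hs | hC
    · rw [hs] at h0; exact (H.dist _ _ _ h0).2.2 rfl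
    · exact aux_asym H h0 hC

/-- Key lemma A: two consecutive wraps on the left give two wraps on the right. -/
lemma aux_keyA (H : AuxHyp C) {a b c : J} (ha : a ≠ 0) (hb : b ≠ 0) (hc : c ≠ 0)
    (h1 : C 0 (a + b) a) (hs0 : a + b ≠ 0)
    (h2 : (a + b) + c = 0 ∨ C 0 ((a + b) + c) (a + b)) :
    (b + c ≠ 0) ∧ C 0 (b + c) b ∧ (a + (b + c) = 0 ∨ C 0 (a + (b + c)) a) := by
  rcases h2 with hu | hu
  · -- u = 0 case
    have htc : b + c = -a := aux_eq_of hu (by abel)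
    have ht0 : b + c ≠ 0 := by rw [htc]; exact neg_ne_zero.mpr ha
    refine ⟨ht0, ?_, Or.inl (aux_eq_of hu (by abel))⟩
    have s1 : C (-a) b 0 := aux_shift H (-a) h1 (by abel) (by abel) (by abel)
    have s2 : C 0 (-a) b := H.cyc _ _ _ (H.cyc _ _ _ s1)
    exact aux_shift H 0 s2 (by abel) (by rw [htc, add_zero]) (by abel)
  · -- u ≠ 0 case
    have hCua : C 0 ((a + b) + c) a := H.trans _ _ _ _ hu h1
    have ht0 : b + c ≠ 0 := by
      intro ht
      have he : (a + b) + c = a := aux_eq_of ht (by abel)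
      rw [he] at hCua
      exact (H.dist _ _ _ hCua).2.1 rfl
    refine ⟨ht0, ?_, Or.inr (aux_shift H 0 hCua (by abel) (by abel) (by abel))⟩
    by_contra hcb
    have hq : C 0 b (b + c) :=
      aux_tot H ht0 hb (fun hE => hc (add_eq_left.mp hE)) hcb
    have hq2 : C a (a + b) ((a + b) + c) := aux_shift H a hq (by abel) (by abel) (by abel)
    have hq3 : C ((a + b) + c) a (a + b) := H.cyc _ _ _ (H.cyc _ _ _ hq2)
    have c1 : C (a + b) a 0 := H.cyc _ _ _ h1
    have c2 : C (a + b) 0 ((a + b) + c) := H.cyc _ _ _ (H.cyc _ _ _ hu)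
    have c3 : C (a + b) a ((a + b) + c) := H.trans _ _ _ _ c1 c2
    have hq4 : C ((a + b) + c) (a + b) a := H.cyc _ _ _ (H.cyc _ _ _ c3)
    exact aux_asym H hq4 hq3

/-- Key lemma B: two consecutive wraps on the right give two wraps on the left. -/
lemma aux_keyB (H : AuxHyp C) {a b c : J} (ha : a ≠ 0) (hb : b ≠ 0) (hc : c ≠ 0)
    (h3 : C 0 (b + c) b) (ht0 : b + c ≠ 0)
    (h4 : a + (b + c) = 0 ∨ C 0 (a + (b + c)) a) :
    (a + b ≠ 0) ∧ C 0 (a + b) a ∧ ((a + b) + c = 0 ∨ C 0 ((a + b) + c) (a + b)) := by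
  rcases h4 with hu | hu
  · -- u = 0 case
    have hab : a + b = -c := aux_eq_of hu (by abel)
    have ha' : a = -(b + c) := aux_eq_of hu (by abel)
    have hs0 : a + b ≠ 0 := by rw [hab]; exact neg_ne_zero.mpr hc
    refine ⟨hs0, ?_, Or.inl (aux_eq_of hu (by abel))⟩
    have s1 : C (-(b + c)) 0 (-c) := aux_shift H (-(b + c)) h3 (by abel) (by abel) (by abel)
    have s2 : C 0 (-c) (-(b + c)) := H.cyc _ _ _ s1
    exact aux_shift H 0 s2 (by abel) (by rw [hab, add_zero]) (by rw [ha', add_zero])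
  · -- u ≠ 0 case
    have hu0 : a + (b + c) ≠ 0 := Ne.symm (H.dist _ _ _ hu).1
    have hs0 : a + b ≠ 0 := by
      intro hs
      have hab' : a = -b := aux_eq_of hs (by abel)
      have he : a + (b + c) = c := by rw [hab']; abel
      have h4' : C 0 c (-b) :=
        aux_shift H 0 hu (by abel) (by rw [he, add_zero]) (by rw [hab', add_zero])
      have h4'' : C b (b + c) 0 := aux_shift H b h4' (by abel) (by abel) (by abel)
      have h4''' : C 0 b (b + c) := H.cyc _ _ _ (H.cyc _ _ _ h4'')
      exact aux_asym H h3 h4'''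
    have hq1 : C a (a + (b + c)) (a + b) := aux_shift H a h3 (by abel) (by abel) (by abel)
    have hq2 : C (a + (b + c)) (a + b) a := H.cyc _ _ _ hq1
    have hq3 : C (a + (b + c)) a 0 := H.cyc _ _ _ hu
    have hq4 : C (a + (b + c)) (a + b) 0 := H.trans _ _ _ _ hq2 hq3
    have hq5 : C 0 (a + (b + c)) (a + b) := H.cyc _ _ _ (H.cyc _ _ _ hq4)
    have part2 : C 0 (a + b) a := by
      by_contra hcs
      have has : C 0 a (a + b) :=
        aux_tot H hs0 ha (fun hE => hb (add_eq_left.mp hE)) hcs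
      have hq6 : C (-a) 0 b := aux_shift H (-a) has (by abel) (by abel) (by abel)
      have hq7 : C 0 b (-a) := H.cyc _ _ _ hq6
      have hq8 : C 0 (b + c) (-a) := H.trans _ _ _ _ h3 hq7
      have hq9 : C a (a + (b + c)) 0 := aux_shift H a hq8 (by abel) (by abel) (by abel)
      have hq10 : C 0 a (a + (b + c)) := H.cyc _ _ _ (H.cyc _ _ _ hq9)
      exact aux_asym H hu hq10
    exact ⟨hs0, part2, Or.inr (aux_shift H 0 hq5 (by abel) (by abel) (by abel))⟩

/-- Key lemma C: two consecutive no-wraps on the right give two no-wraps on the left. -/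
lemma aux_keyC (H : AuxHyp C) {a b c : J} (ha : a ≠ 0) (hb : b ≠ 0) (hc : c ≠ 0)
    (h3 : C 0 b (b + c)) (h4 : C 0 a (a + (b + c))) :
    C 0 a (a + b) ∧ C 0 (a + b) ((a + b) + c) := by
  have ht0 : b + c ≠ 0 := Ne.symm (H.dist _ _ _ h3).2.2
  have hu0 : a + (b + c) ≠ 0 := Ne.symm (H.dist _ _ _ h4).2.2
  have hs0 : a + b ≠ 0 := by
    intro hs
    have hq : C a (a + b) (a + (b + c)) := aux_shift H a h3 (by abel) (by abel) (by abel)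
    rw [hs] at hq
    have hq' : C 0 (a + (b + c)) a := H.cyc _ _ _ hq
    exact aux_asym H h4 hq'
  have hab : C 0 a (a + b) := by
    by_contra hcs
    have hsa : C 0 (a + b) a :=
      aux_tot H ha hs0 (fun hE => hb (left_eq_add.mp hE)) hcs
    have s1 : C (-a) b 0 := aux_shift H (-a) hsa (by abel) (by abel) (by abel)
    have s2 : C 0 (-a) b := H.cyc _ _ _ (H.cyc _ _ _ s1)
    have s3 : C 0 (-a) (b + c) := H.trans _ _ _ _ s2 h3
    have s4 : C a 0 (a + (b + c)) := aux_shift H a s3 (by abel) (by abel) (by abel)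
    have s5 : C 0 (a + (b + c)) a := H.cyc _ _ _ s4
    exact aux_asym H h4 s5
  refine ⟨hab, ?_⟩
  by_contra hcu
  have hus : C 0 ((a + b) + c) (a + b) :=
    aux_tot H hs0 (fun h0 => hu0 (aux_eq_of h0 (by abel)))
      (fun hE => hc (left_eq_add.mp hE)) hcu
  have hq4 : C (-((a + b) + c)) 0 (-c) :=
    aux_shift H (-((a + b) + c)) hus (by abel) (by abel) (by abel)
  have hq4' : C 0 (-c) (-((a + b) + c)) := H.cyc _ _ _ hq4
  have hq5 : C 0 (-(-((a + b) + c))) (-(-c)) := aux_neg H hq4'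
  have hq5' : C 0 (a + (b + c)) c := aux_shift H 0 hq5 (by abel) (by abel) (by abel)
  have hq8 : C 0 c (b + c) := aux_symW H hb hc ht0 h3
  have hq9 : C 0 (b + c) (a + (b + c)) := aux_symW H ha ht0 hu0 h4
  have hq10 : C 0 c (a + (b + c)) := H.trans _ _ _ _ hq8 hq9
  exact aux_asym H hq10 hq5'

/-- Key lemma D: two consecutive no-wraps on the left give two no-wraps on the right. -/
lemma aux_keyD (H : AuxHyp C) {a b c : J} (ha : a ≠ 0) (hb : b ≠ 0) (hc : c ≠ 0)
    (h1 : C 0 a (a + b)) (h2 : C 0 (a + b) ((a + b) + c)) :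
    C 0 b (b + c) ∧ C 0 a (a + (b + c)) := by
  have hs0 : a + b ≠ 0 := Ne.symm (H.dist _ _ _ h1).2.2
  have hq1 : C 0 a ((a + b) + c) := H.trans _ _ _ _ h1 h2
  have hP4 : C 0 a (a + (b + c)) := aux_shift H 0 hq1 (by abel) (by abel) (by abel)
  have ht0 : b + c ≠ 0 := by
    intro ht
    have he : (a + b) + c = a := aux_eq_of ht (by abel)
    rw [he] at hq1
    exact (H.dist _ _ _ hq1).2.1 rfl
  refine ⟨?_, hP4⟩
  by_contra hcb
  have htb : C 0 (b + c) b :=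
    aux_tot H hb ht0 (fun hE => hc (add_eq_left.mp hE.symm)) hcb
  have hq2 : C a ((a + b) + c) (a + b) := aux_shift H a htb (by abel) (by abel) (by abel)
  have hq6 : C (a + b) a ((a + b) + c) := H.cyc _ _ _ (H.cyc _ _ _ hq2)
  have hq4 : C (a + b) ((a + b) + c) 0 := H.cyc _ _ _ h2
  have hq7 : C (a + b) a 0 := H.trans _ _ _ _ hq6 hq4
  have hq8 : C 0 (a + b) a := H.cyc _ _ _ (H.cyc _ _ _ hq7)
  exact aux_asym H h1 hq8

/-- The master cocycle lemma. -/
lemma aux_master (H : AuxHyp C) (a b c : J) :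
    ((auxP C a b ∧ auxP C (a + b) c) ↔ (auxP C b c ∧ auxP C a (b + c))) ∧
    ((auxP C a b ∨ auxP C (a + b) c) ↔ (auxP C b c ∨ auxP C a (b + c))) := by
  by_cases ha : a = 0
  · subst ha
    have t1 : auxP C 0 b := Or.inl rfl
    have t2 : auxP C 0 (b + c) := Or.inl rfl
    simp only [zero_add]
    exact ⟨⟨fun h => ⟨h.2, t2⟩, fun h => ⟨t1, h.1⟩⟩,
           ⟨fun _ => Or.inr t2, fun _ => Or.inl t1⟩⟩
  by_cases hb : b = 0
  · subst hb
    have t1 : auxP C a 0 := Or.inr (Or.inl rfl)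
    have t2 : auxP C 0 c := Or.inl rfl
    simp only [add_zero, zero_add]
    exact ⟨⟨fun h => ⟨t2, h.2⟩, fun h => ⟨t1, h.2⟩⟩,
           ⟨fun _ => Or.inl t2, fun _ => Or.inl t1⟩⟩
  by_cases hc : c = 0
  · subst hc
    have t1 : auxP C (a + b) 0 := Or.inr (Or.inl rfl)
    have t2 : auxP C b 0 := Or.inr (Or.inl rfl)
    simp only [add_zero]
    exact ⟨⟨fun h => ⟨t2, h.1⟩, fun h => ⟨h.2, t1⟩⟩,
           ⟨fun _ => Or.inl t2, fun _ => Or.inr t1⟩⟩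
  constructor
  · constructor
    · rintro ⟨hp1, hp2⟩
      have h1 : C 0 a (a + b) := by
        rcases hp1 with h | h | h
        exacts [absurd h ha, absurd h hb, h]
      have hs0 : a + b ≠ 0 := Ne.symm (H.dist _ _ _ h1).2.2
      have h2 : C 0 (a + b) ((a + b) + c) := by
        rcases hp2 with h | h | h
        exacts [absurd h hs0, absurd h hc, h]
      obtain ⟨g1, g2⟩ := aux_keyD H ha hb hc h1 h2
      exact ⟨Or.inr (Or.inr g1), Or.inr (Or.inr g2)⟩
    · rintro ⟨hp3, hp4⟩
      have h3 : C 0 b (b + c) := by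
        rcases hp3 with h | h | h
        exacts [absurd h hb, absurd h hc, h]
      have ht0 : b + c ≠ 0 := Ne.symm (H.dist _ _ _ h3).2.2
      have h4 : C 0 a (a + (b + c)) := by
        rcases hp4 with h | h | h
        exacts [absurd h ha, absurd h ht0, h]
      obtain ⟨g1, g2⟩ := aux_keyC H ha hb hc h3 h4
      exact ⟨Or.inr (Or.inr g1), Or.inr (Or.inr g2)⟩
  · constructor
    · intro h
      by_contra hcon
      obtain ⟨hn3, hn4⟩ := not_or.mp hcon
      obtain ⟨_, _, h3⟩ := aux_unP H hn3
      obtain ⟨_, ht0, h4⟩ := aux_unP H hn4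
      have h3' : C 0 (b + c) b := by
        rcases h3 with h' | h'
        exacts [absurd h' ht0, h']
      obtain ⟨hs0, hsa, hsc⟩ := aux_keyB H ha hb hc h3' ht0 h4
      rcases h with hp | hp
      · exact aux_mkNP H ha hb (Or.inr hsa) hp
      · exact aux_mkNP H hs0 hc hsc hp
    · intro h
      by_contra hcon
      obtain ⟨hn1, hn2⟩ := not_or.mp hcon
      obtain ⟨_, _, h1⟩ := aux_unP H hn1
      obtain ⟨hs0, _, h2⟩ := aux_unP H hn2
      have h1' : C 0 (a + b) a := by
        rcases h1 with h' | h'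
        exacts [absurd h' hs0, h']
      obtain ⟨ht0, g1, g2⟩ := aux_keyA H ha hb hc h1' hs0 h2
      rcases h with hp | hp
      · exact aux_mkNP H hb hc (Or.inr g1) hp
      · exact aux_mkNP H ha ht0 g2 hp

lemma aux_Psymm (H : AuxHyp C) (x y : J) (h : auxP C x y) : auxP C y x := by
  by_cases hx : x = 0
  · exact Or.inr (Or.inl hx)
  by_cases hy : y = 0
  · exact Or.inl hy
  rcases h with h0 | h0 | h0
  · exact absurd h0 hx
  · exact absurd h0 hy
  by_cases hs : x + y = 0
  · rw [hs] at h0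
    exact ((H.dist _ _ _ h0).2.2 rfl).elim
  · exact Or.inr (Or.inr (aux_shift H 0 (aux_symW H hx hy hs h0)
      (by abel) (by abel) (by abel)))

end AuxCyc

/-- The universal cover construction: for a cyclically ordered abelian
group `(J, +, C)`, the operation `⊕` on `ℤ × J` makes `ℤ × J` an abelian group with
identity `(0,0)`. -/
theorem stmt19 {J : Type*} [AddCommGroup J] (C : J → J → J → Prop)
    (hdist : ∀ a b c : J, C a b c → a ≠ b ∧ b ≠ c ∧ a ≠ c)
    (htrans : ∀ a b c d : J, C a b c → C a c d → C a b d)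
    (htotal : ∀ a b c : J, a ≠ b → b ≠ c → a ≠ c → C a b c ∨ C c b a)
    (hcyc : ∀ a b c : J, C a b c → C b c a)
    (htransl : ∀ a b c d : J, C a b c → C (a + d) (b + d) (c + d))
    (op : ℤ × J → ℤ × J → ℤ × J)
    (hop₁ : ∀ (m m' : ℤ) (a a' : J), (a = 0 ∨ a' = 0 ∨ C 0 a (a + a')) →
      op (m, a) (m', a') = (m + m', a + a'))
    (hop₂ : ∀ (m m' : ℤ) (a a' : J), ¬ (a = 0 ∨ a' = 0 ∨ C 0 a (a + a')) →
      op (m, a) (m', a') = (m + m' + 1, a + a')) :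
    (∀ x y : ℤ × J, op x y = op y x) ∧
    (∀ x y z : ℤ × J, op (op x y) z = op x (op y z)) ∧
    (∀ x : ℤ × J, op x (0, 0) = x) ∧
    (∀ x : ℤ × J, ∃ y : ℤ × J, op x y = (0, 0)) := by
  have H : AuxHyp C := ⟨hdist, htrans, htotal, hcyc, htransl⟩
  refine ⟨?_, ?_, ?_, ?_⟩
  · -- commutativity
    rintro ⟨m, a⟩ ⟨m', a'⟩
    by_cases h : auxP C a a'
    · rw [hop₁ m m' a a' h, hop₁ m' m a' a (aux_Psymm H a a' h)]
      simp only [Prod.mk.injEq]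
      exact ⟨add_comm m m', add_comm a a'⟩
    · rw [hop₂ m m' a a' h, hop₂ m' m a' a (fun h' => h (aux_Psymm H a' a h'))]
      simp only [Prod.mk.injEq]
      exact ⟨by ring, add_comm a a'⟩
  · -- associativity
    rintro ⟨m, a⟩ ⟨m', b⟩ ⟨m'', c⟩
    have hm := aux_master H a b c
    by_cases h1 : auxP C a b <;> by_cases h2 : auxP C (a + b) c <;>
      by_cases h3 : auxP C b c <;> by_cases h4 : auxP C a (b + c)
    all_goals first
      | exact absurd (hm.1.mp ⟨h1, h2⟩).1 h3
      | exact absurd (hm.1.mp ⟨h1, h2⟩).2 h4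
      | exact absurd (hm.1.mpr ⟨h3, h4⟩).1 h1
      | exact absurd (hm.1.mpr ⟨h3, h4⟩).2 h2
      | exact absurd (hm.2.mp (Or.inl h1)) (not_or.mpr ⟨h3, h4⟩)
      | exact absurd (hm.2.mp (Or.inr h2)) (not_or.mpr ⟨h3, h4⟩)
      | exact absurd (hm.2.mpr (Or.inl h3)) (not_or.mpr ⟨h1, h2⟩)
      | exact absurd (hm.2.mpr (Or.inr h4)) (not_or.mpr ⟨h1, h2⟩)
      | (rw [hop₁ m m' a b h1, hop₁ (m + m') m'' (a + b) c h2, hop₁ m' m'' b c h3,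
            hop₁ m (m' + m'') a (b + c) h4]
         simp only [Prod.mk.injEq]
         exact ⟨by ring, add_assoc a b c⟩)
      | (rw [hop₁ m m' a b h1, hop₂ (m + m') m'' (a + b) c h2, hop₁ m' m'' b c h3,
            hop₂ m (m' + m'') a (b + c) h4]
         simp only [Prod.mk.injEq]
         exact ⟨by ring, add_assoc a b c⟩)
      | (rw [hop₁ m m' a b h1, hop₂ (m + m') m'' (a + b) c h2, hop₂ m' m'' b c h3,
            hop₁ m (m' + m'' + 1) a (b + c) h4]
         simp only [Prod.mk.injEq]
         exact ⟨by ring, add_assoc a b c⟩)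
      | (rw [hop₂ m m' a b h1, hop₁ (m + m' + 1) m'' (a + b) c h2, hop₁ m' m'' b c h3,
            hop₂ m (m' + m'') a (b + c) h4]
         simp only [Prod.mk.injEq]
         exact ⟨by ring, add_assoc a b c⟩)
      | (rw [hop₂ m m' a b h1, hop₁ (m + m' + 1) m'' (a + b) c h2, hop₂ m' m'' b c h3,
            hop₁ m (m' + m'' + 1) a (b + c) h4]
         simp only [Prod.mk.injEq]
         exact ⟨by ring, add_assoc a b c⟩)
      | (rw [hop₂ m m' a b h1, hop₂ (m + m' + 1) m'' (a + b) c h2, hop₂ m' m'' b c h3,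
            hop₂ m (m' + m'' + 1) a (b + c) h4]
         simp only [Prod.mk.injEq]
         exact ⟨by ring, add_assoc a b c⟩)
  · -- identity
    rintro ⟨m, a⟩
    rw [hop₁ m 0 a 0 (Or.inr (Or.inl rfl))]
    simp
  · -- inverses
    rintro ⟨m, a⟩
    by_cases ha : a = 0
    · subst ha
      exact ⟨(-m, 0), by rw [hop₁ m (-m) 0 0 (Or.inl rfl)]; simp⟩
    · refine ⟨(-m - 1, -a), ?_⟩
      have hn : ¬ (a = 0 ∨ -a = 0 ∨ C 0 a (a + -a)) := by
        rintro (h | h | h)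
        · exact ha h
        · exact ha (neg_eq_zero.mp h)
        · rw [add_neg_cancel] at h
          exact (hdist _ _ _ h).2.2 rfl
      rw [hop₂ m (-m - 1) a (-a) hn]
      simp only [Prod.mk.injEq]
      exact ⟨by ring, add_neg_cancel a⟩
end
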